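/- Main theorem for ℜ_d: for every formula φ of 𝓛, the following three statements are equivalent: (1) φ is a tautology of the enumeration ξ of deterministic partial recursive functions; (2) w ⊩ φ for every world w of every deterministic Kripke model; (3) ⊢_{ℜ_d} φ. -/

import Mathlib

/-- Formulas of the modal language 𝓛: propositional variables, ⊥, →, and ▷. -/
inductive Formula : Type
  | var : ℕ → Formula
  | bot : Formula
  | imp : Formula → Formula → Formula
  | tri : Formula → Formula → Formula
deriving DecidableEq

namespace Formula

/-- ¬φ := φ → ⊥ -/
def neg (φ : Formula) : Formula := imp φ bot
/-- ⊤ := ¬⊥ -/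
def top : Formula := neg bot
/-- φ ∨ ψ := ¬φ → ψ -/
def disj (φ ψ : Formula) : Formula := imp (neg φ) ψ
/-- φ ∧ ψ := ¬(φ → ¬ψ) -/
def conj (φ ψ : Formula) : Formula := neg (imp φ (neg ψ))

/-- `φ` is a substitution instance of a classical propositional tautology:
it evaluates to `true` under every boolean valuation of formulas that
respects `⊥` and `→` (variables and `▷`-formulas are treated as atoms). -/
def IsPropTaut (φ : Formula) : Prop :=
  ∀ v : Formula → Bool, v bot = false →
    (∀ a b, v (imp a b) = (!(v a) || v b)) → v φ = true

/-- Hilbert-style provability.  `Prv false` is the logic ℜ (axioms: classical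
tautologies, A1, A2, A3; rules: Modus Ponens and monotonicity M);
`Prv true` is the logic ℜ_d, which additionally has axiom A4. -/
inductive Prv : Bool → Formula → Prop
  | taut {d : Bool} {φ} : IsPropTaut φ → Prv d φ
  | a1 {d : Bool} (φ ψ χ) : Prv d (imp (tri φ ψ) (imp (tri χ ψ) (tri (disj φ χ) ψ)))
  | a2 {d : Bool} (φ) : Prv d (tri bot φ)
  | a3 {d : Bool} (φ) : Prv d (tri φ top)
  | a4 (φ ψ χ) : Prv true (imp (tri φ ψ) (imp (tri φ χ) (tri φ (conj ψ χ))))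
  | mp {d : Bool} {φ ψ} : Prv d (imp φ ψ) → Prv d φ → Prv d ψ
  | mono {d : Bool} {φ₁ φ₂ ψ₁ ψ₂} : Prv d (imp φ₁ φ₂) → Prv d (imp ψ₁ ψ₂) →
      Prv d (imp (tri φ₂ ψ₁) (tri φ₁ ψ₂))

/-- `Deriv d Δ φ`: φ is derivable from the hypotheses Δ together with all
theorems of the logic (`Prv d`) using only Modus Ponens. -/
inductive Deriv (d : Bool) (Δ : Set Formula) : Formula → Prop
  | hyp {φ} : φ ∈ Δ → Deriv d Δ φ
  | thm {φ} : Prv d φ → Deriv d Δ φ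
  | mp {φ ψ} : Deriv d Δ (imp φ ψ) → Deriv d Δ φ → Deriv d Δ ψ

/-- Conjunction of a list of formulas (empty conjunction is ⊤). -/
def conjList : List Formula → Formula
  | [] => top
  | φ :: l => conj φ (conjList l)

/-- ⋀Γ : conjunction of all formulas of a finite set Γ (⋀∅ = ⊤). -/
noncomputable def bigConj (Γ : Finset Formula) : Formula := conjList Γ.toList

/-- A set of formulas is consistent if ⊥ is not derivable from it. -/
def Consistent (d : Bool) (Δ : Set Formula) : Prop := ¬ Deriv d Δ bot

/-- The pair (u,v) is w-consistent: w ⊬ ⋀u ▷ ¬⋀v. -/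
def WCons (d : Bool) (w : Set Formula) (u v : Finset Formula) : Prop :=
  ¬ Deriv d w (tri (bigConj u) (neg (bigConj v)))

/-- The operation ∼: ∼(¬φ) = φ, and ∼φ = ¬φ if φ is not a negation. -/
def simNeg : Formula → Formula
  | imp φ bot => φ
  | φ => neg φ

/-- Φ is closed under subformulas. -/
def SubClosed (Φ : Finset Formula) : Prop :=
  (∀ a b, imp a b ∈ Φ → a ∈ Φ ∧ b ∈ Φ) ∧ (∀ a b, tri a b ∈ Φ → a ∈ Φ ∧ b ∈ Φ)

/-- Φ is closed under the operation ∼. -/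
def SimClosed (Φ : Finset Formula) : Prop := ∀ φ ∈ Φ, simNeg φ ∈ Φ

/-- w is a maximal consistent subset of Φ: w ⊆ Φ, w is consistent, and for
every φ ∈ Φ either φ ∈ w or ∼φ ∈ w. -/
def MaxCons (d : Bool) (Φ : Finset Formula) (w : Finset Formula) : Prop :=
  w ⊆ Φ ∧ Consistent d ↑w ∧ ∀ φ ∈ Φ, φ ∈ w ∨ simNeg φ ∈ w

/-- Kripke forcing: `rel w u v` means u →_w v, `val w p` means w ⊩ p. -/
def Forces {W : Type*} (rel : W → W → W → Prop) (val : W → ℕ → Prop) :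
    W → Formula → Prop
  | w, var p => val w p
  | _, bot => False
  | w, imp a b => Forces rel val w a → Forces rel val w b
  | w, tri a b => ∀ u v, rel w u v → Forces rel val u a →
      ∃ v', rel w u v' ∧ Forces rel val v' b

end Formula

/-- A Kripke model: a finite set of worlds, a ternary computability relation,
and a forcing relation between worlds and propositional variables. -/
structure KripkeModel where
  W : Type
  fin : Finite W
  rel : W → W → W → Prop
  val : W → ℕ → Prop

/-- A Kripke model is deterministic if for all worlds w, u there is at most
one v with u →_w v. -/
def KripkeModel.Deterministic (M : KripkeModel) : Prop :=
  ∀ w u v v', M.rel w u v → M.rel w u v' → v = v'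

/-- Forcing in a Kripke model. -/
def KripkeModel.Forces (M : KripkeModel) : M.W → Formula → Prop :=
  Formula.Forces M.rel M.val

/-- The standard enumeration of nondeterministic partial recursive functions:
ζ_w(u) = the set of possible outputs of machine (code) w on input u. -/
def zeta (w u : ℕ) : Set ℕ :=
  {v | ((Denumerable.ofNat Nat.Partrec.Code w).eval (Nat.pair u v)).Dom}

/-- The standard enumeration of deterministic partial recursive functions:
ξ_w(u) = the value of the partial recursive function with code w on input u. -/
def xi (w u : ℕ) : Part ℕ :=
  (Denumerable.ofNat Nat.Partrec.Code w).eval u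

namespace Formula

/-- Set semantics for nondeterministic partial recursive functions
(existential reading of ▷). -/
def semN (val : ℕ → Set ℕ) : Formula → Set ℕ
  | var p => val p
  | bot => ∅
  | imp a b => (Set.univ \ semN val a) ∪ semN val b
  | tri a b => {w | ∀ u ∈ semN val a, zeta w u ≠ ∅ → zeta w u ∩ semN val b ≠ ∅}

/-- Set semantics for deterministic partial recursive functions. -/
def semD (val : ℕ → Set ℕ) : Formula → Set ℕ
  | var p => val p
  | bot => ∅
  | imp a b => (Set.univ \ semD val a) ∪ semD val b
  | tri a b => {w | ∀ u ∈ semD val a, ∀ h : (xi w u).Dom, (xi w u).get h ∈ semD val b}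

/-- Universal set semantics for nondeterministic partial recursive functions:
every terminating computation path from φ* ends in ψ*. -/
def semU (val : ℕ → Set ℕ) : Formula → Set ℕ
  | var p => val p
  | bot => ∅
  | imp a b => (Set.univ \ semU val a) ∪ semU val b
  | tri a b => {w | ∀ u ∈ semU val a, zeta w u ⊆ semU val b}

/-- A canonical injective encoding of formulas as natural numbers. -/
def enc : Formula → ℕ
  | var n => 4 * n
  | bot => 1
  | imp a b => 4 * Nat.pair (enc a) (enc b) + 2
  | tri a b => 4 * Nat.pair (enc a) (enc b) + 3

end Formula

/-! (3) ⇒ (1) is soundness: every axiom of ℜ_d holds under `ξ`, A4 because each `ξ_w` is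
single-valued.

(2) ⇒ (3) is completeness for finite deterministic models. Worlds are maximal consistent subsets
of the closure of `φ`, each labelled by a formula that its successors must refute; for a world `w`
and a world `u` labelled `c`, the successor is one maximal consistent set containing every `χ` with
`w ⊢ ⋀u ▷ χ` and avoiding `c`, so the model is deterministic. A4 is what makes such a successor
exist: it lets `w` conjoin all its `▷`-consequences of `⋀u` into a single one.

(1) ⇒ (2): by Kleene's recursion theorem the worlds of a finite deterministic model can be
realized as codes `A w` with `ξ_{A w}(A u) = A v` exactly when `u →_w v` (and `ξ_{A w}` undefined
off the image of `A`); under the valuation `p* = A '' {w | w ⊩ p}`, `A w ∈ ψ*` iff `w ⊩ ψ`. -/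

namespace Formula

def IsBoolEval (v : Formula → Bool) : Prop :=
  v bot = false ∧ ∀ a b, v (imp a b) = (!(v a) || v b)

lemma isPropTaut_iff {φ : Formula} : IsPropTaut φ ↔ ∀ v, IsBoolEval v → v φ = true :=
  ⟨fun h v hv => h v hv.1 hv.2, fun h v h₀ h₁ => h v ⟨h₀, h₁⟩⟩

def disjList : List Formula → Formula
  | [] => bot
  | φ :: l => disj φ (disjList l)

namespace IsBoolEval

variable {v : Formula → Bool}

lemma imp (hv : IsBoolEval v) (a b : Formula) : v (imp a b) = (!(v a) || v b) := hv.2 a b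

lemma neg (hv : IsBoolEval v) (a : Formula) : v (neg a) = !(v a) := by
  simp [Formula.neg, hv.imp, hv.1]

lemma conj (hv : IsBoolEval v) (a b : Formula) : v (conj a b) = (v a && v b) := by
  simp [Formula.conj, hv.neg, hv.imp]

lemma disj (hv : IsBoolEval v) (a b : Formula) : v (disj a b) = (v a || v b) := by
  simp [Formula.disj, hv.neg, hv.imp]

lemma simNeg (hv : IsBoolEval v) (a : Formula) : v (simNeg a) = !(v a) := by
  rcases a with _ | _ | ⟨a, _ | _ | _ | _⟩ | _ <;> simp [Formula.simNeg, hv.neg, hv.imp, hv.1]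

lemma bigConj (hv : IsBoolEval v) (s : Finset Formula) :
    v (bigConj s) = true ↔ ∀ x ∈ s, v x = true := by
  suffices ∀ l, v (conjList l) = l.all v by simp [Formula.bigConj, this]
  intro l
  induction l with
  | nil => simp [conjList, top, hv.neg, hv.1]
  | cons a l ih => simp [conjList, hv.conj, ih]

lemma bigConj_insert (hv : IsBoolEval v) (x : Formula) (s : Finset Formula) :
    v (Formula.bigConj (insert x s)) = (v x && v (Formula.bigConj s)) := by
  rw [Bool.eq_iff_iff, hv.bigConj, Bool.and_eq_true, hv.bigConj, Finset.forall_mem_insert]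

lemma disjList (hv : IsBoolEval v) (l : List Formula) : v (disjList l) = l.any v := by
  induction l with
  | nil => simp [Formula.disjList, hv.1]
  | cons a l ih => simp [Formula.disjList, hv.disj, ih]

end IsBoolEval

section Derivations

variable {d : Bool} {Δ Δ' : Set Formula} {a b c γ χ : Formula}

lemma Prv.of_deriv_empty (h : Deriv d ∅ χ) : Prv d χ := by
  induction h with
  | hyp hχ => exact absurd hχ (Set.notMem_empty _)
  | thm hχ => exact hχ
  | mp _ _ ih₁ ih₂ => exact .mp ih₁ ih₂

lemma Deriv.of_taut (ht : IsPropTaut (imp a b)) (ha : Deriv d Δ a) : Deriv d Δ b :=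
  .mp (.thm (.taut ht)) ha

lemma Deriv.of_taut₂ (ht : IsPropTaut (imp a (imp b c))) (ha : Deriv d Δ a) (hb : Deriv d Δ b) :
    Deriv d Δ c :=
  .mp (.of_taut ht ha) hb

lemma isPropTaut_imp_self (a : Formula) : IsPropTaut (imp a a) :=
  isPropTaut_iff.2 fun v hv => by cases h : v a <;> simp [hv.imp, h]

lemma Deriv.imp_of_forall_imp (h : Deriv d Δ χ) (hΔ : ∀ ψ ∈ Δ, Deriv d Δ' (imp γ ψ)) :
    Deriv d Δ' (imp γ χ) := by
  induction h with
  | hyp hχ => exact hΔ _ hχ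
  | @thm ψ hψ =>
      refine .of_taut (isPropTaut_iff.2 fun v hv => ?_) (.thm hψ)
      simp only [hv.imp]
      cases v ψ <;> simp
  | @mp ψ θ _ _ ih₁ ih₂ =>
      refine .of_taut₂ (isPropTaut_iff.2 fun v hv => ?_) ih₁ ih₂
      simp only [hv.imp]
      cases v γ <;> cases v ψ <;> simp

lemma Deriv.deduction (h : Deriv d (insert γ Δ) χ) : Deriv d Δ (imp γ χ) := by
  refine h.imp_of_forall_imp fun ψ hψ => ?_
  rcases hψ with rfl | hψ
  · exact .thm (.taut (isPropTaut_imp_self ψ))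
  · refine .of_taut (isPropTaut_iff.2 fun v hv => ?_) (.hyp hψ)
    simp only [hv.imp]
    cases v ψ <;> simp

lemma isPropTaut_bigConj_imp {s : Finset Formula} (h : a ∈ s) :
    IsPropTaut (imp (bigConj s) a) :=
  isPropTaut_iff.2 fun v hv => by
    cases hs : v (bigConj s)
    · simp [hv.imp, hs]
    · simp [hv.imp, (hv.bigConj s).1 hs a h]

lemma isPropTaut_simNeg_contra (a : Formula) : IsPropTaut (imp a (imp (simNeg a) bot)) :=
  isPropTaut_iff.2 fun v hv => by
    simp only [hv.imp, hv.simNeg, hv.1]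
    cases v a <;> simp

lemma Prv.imp_bigConj_of_deriv {s : Finset Formula} (h : Deriv d ↑s χ) :
    Prv d (imp (bigConj s) χ) :=
  .of_deriv_empty (h.imp_of_forall_imp fun _ hψ => .thm (.taut (isPropTaut_bigConj_imp hψ)))

lemma Deriv.tri_of_imp_left (h : Prv d (imp a b)) (hd : Deriv d Δ (tri b c)) :
    Deriv d Δ (tri a c) :=
  .mp (.thm (.mono h (.taut (isPropTaut_imp_self c)))) hd

lemma Deriv.tri_of_imp_right (h : Prv d (imp b c)) (hd : Deriv d Δ (tri a b)) :
    Deriv d Δ (tri a c) :=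
  .mp (.thm (.mono (.taut (isPropTaut_imp_self a)) h)) hd

lemma Deriv.disjList_tri {l : List Formula} (h : ∀ x ∈ l, Deriv d Δ (tri x b)) :
    Deriv d Δ (tri (disjList l) b) := by
  induction l with
  | nil => exact .thm (.a2 b)
  | cons x l ih =>
      exact .mp (.mp (.thm (.a1 x b _)) (h x (by simp))) (ih fun y hy => h y (by simp [hy]))

lemma Deriv.tri_bigConj {s : Finset Formula} (h : ∀ χ ∈ s, Deriv true Δ (tri γ χ)) :
    Deriv true Δ (tri γ (bigConj s)) := by
  suffices ∀ l : List Formula, (∀ χ ∈ l, Deriv true Δ (tri γ χ)) →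
      Deriv true Δ (tri γ (conjList l)) from this _ fun χ hχ => h χ (Finset.mem_toList.1 hχ)
  intro l hl
  induction l with
  | nil => exact .thm (.a3 γ)
  | cons χ l ih =>
      exact .mp (.mp (.thm (.a4 γ χ _)) (hl χ (by simp))) (ih fun x hx => hl x (by simp [hx]))

end Derivations

section MaximalConsistent

variable {d : Bool} {Φ w : Finset Formula} {a b χ : Formula}

lemma Consistent.insert_or_insert_simNeg {Δ : Set Formula} (hc : Consistent d Δ) (χ : Formula) :
    Consistent d (insert χ Δ) ∨ Consistent d (insert (simNeg χ) Δ) := by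
  refine or_iff_not_imp_left.2 fun h₁ h₂ => hc (.of_taut₂ ?_ (not_not.1 h₁).deduction h₂.deduction)
  refine isPropTaut_iff.2 fun v hv => ?_
  simp only [hv.imp, hv.simNeg, hv.1]
  cases v χ <;> simp

lemma MaxCons.not_deriv_of_simNeg_mem (hw : MaxCons d Φ w) (h : simNeg χ ∈ w) :
    ¬ Deriv d ↑w χ :=
  fun hd => hw.2.1 (.of_taut₂ (isPropTaut_simNeg_contra χ) hd (.hyp h))

lemma MaxCons.mem_iff_deriv (hw : MaxCons d Φ w) (hχ : χ ∈ Φ) : χ ∈ w ↔ Deriv d ↑w χ :=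
  ⟨.hyp, fun hd => (hw.2.2 χ hχ).resolve_right fun h => hw.not_deriv_of_simNeg_mem h hd⟩

lemma MaxCons.imp_mem_iff (hsub : SubClosed Φ) (hw : MaxCons d Φ w) (h : imp a b ∈ Φ) :
    imp a b ∈ w ↔ (a ∈ w → b ∈ w) := by
  obtain ⟨ha, hb⟩ := hsub.1 a b h
  rw [hw.mem_iff_deriv h, hw.mem_iff_deriv ha, hw.mem_iff_deriv hb]
  refine ⟨.mp, fun hab => ?_⟩
  by_cases hda : Deriv d ↑w a
  · refine .of_taut (isPropTaut_iff.2 fun v hv => ?_) (hab hda)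
    simp only [hv.imp]
    cases v a <;> cases v b <;> simp
  · have hna : simNeg a ∈ w := (hw.2.2 a ha).resolve_left fun h => hda (.hyp h)
    refine .of_taut (isPropTaut_iff.2 fun v hv => ?_) (.hyp hna)
    simp only [hv.imp, hv.simNeg]
    cases v a <;> cases v b <;> simp

/-- A consistent subset of `Φ` of maximal size is maximal consistent. -/
theorem exists_maxCons_superset (hsim : SimClosed Φ) {S : Finset Formula} (hS : S ⊆ Φ)
    (hc : Consistent d ↑S) : ∃ w, MaxCons d Φ w ∧ S ⊆ w := by
  classical
  obtain ⟨w, hw, hmax⟩ := (Φ.powerset.filter fun w => S ⊆ w ∧ Consistent d ↑w).exists_max_image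
    Finset.card ⟨S, by simp [hS, hc]⟩
  simp only [Finset.mem_filter, Finset.mem_powerset, and_imp] at hw hmax
  obtain ⟨hwΦ, hSw, hwc⟩ := hw
  have hgrow : ∀ ψ ∈ Φ, ψ ∉ w → ¬ Consistent d (insert ψ ↑w) := fun ψ hψ hψw hcons => by
    rw [← Finset.coe_insert] at hcons
    exact (hmax _ (Finset.insert_subset hψ hwΦ) (hSw.trans (Finset.subset_insert _ _)) hcons).not_gt
      (Finset.card_lt_card (Finset.ssubset_insert hψw))
  refine ⟨w, ⟨hwΦ, hwc, fun χ hχ => ?_⟩, hSw⟩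
  by_contra! hχw
  rcases hwc.insert_or_insert_simNeg χ with h | h
  · exact hgrow χ hχ hχw.1 h
  · exact hgrow _ (hsim χ hχ) hχw.2 h

end MaximalConsistent

section Canonical

variable {Φ w u : Finset Formula} {a b χ : Formula}

open Classical in
noncomputable def succTheory (Φ w u : Finset Formula) : Finset Formula :=
  Φ.filter fun χ => Deriv true ↑w (tri (bigConj u) χ)

lemma mem_succTheory : χ ∈ succTheory Φ w u ↔ χ ∈ Φ ∧ Deriv true ↑w (tri (bigConj u) χ) := by
  classical
  simp [succTheory]

open Classical in
noncomputable def completions (Φ : Finset Formula) (a : Formula) : Finset (Finset Formula) :=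
  Φ.powerset.filter fun m => a ∈ m ∧ ∀ χ ∈ Φ, χ ∈ m ∨ simNeg χ ∈ m

lemma mem_completions {m : Finset Formula} :
    m ∈ completions Φ a ↔ m ⊆ Φ ∧ a ∈ m ∧ ∀ χ ∈ Φ, χ ∈ m ∨ simNeg χ ∈ m := by
  classical
  simp [completions]

/-- The formulas of `Φ` true under a boolean valuation form a completion. -/
lemma isPropTaut_imp_disjList_completions (hsim : SimClosed Φ) (ha : a ∈ Φ) :
    IsPropTaut (imp a (disjList ((completions Φ a).toList.map bigConj))) := by
  classical
  refine isPropTaut_iff.2 fun v hv => ?_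
  cases hva : v a
  · simp [hv.imp, hva]
  · suffices ∃ m ∈ completions Φ a, v (bigConj m) = true by
      simpa [hv.imp, hv.disjList, hva] using this
    refine ⟨Φ.filter fun χ => v χ, mem_completions.2 ⟨Finset.filter_subset _ _, by simp [ha, hva],
      fun χ hχ => ?_⟩, (hv.bigConj _).2 fun x hx => (Finset.mem_filter.1 hx).2⟩
    cases hvχ : v χ
    · exact .inr (Finset.mem_filter.2 ⟨hsim χ hχ, by simp [hv.simNeg, hvχ]⟩)
    · exact .inl (Finset.mem_filter.2 ⟨hχ, hvχ⟩)

lemma deriv_tri_of_forall_maxCons {d : Bool} {Δ : Set Formula} (hsim : SimClosed Φ) (ha : a ∈ Φ)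
    (h : ∀ m, MaxCons d Φ m → a ∈ m → Deriv d Δ (tri (bigConj m) b)) : Deriv d Δ (tri a b) := by
  refine .tri_of_imp_left (.taut (isPropTaut_imp_disjList_completions hsim ha)) (.disjList_tri ?_)
  simp only [List.mem_map, Finset.mem_toList]
  rintro _ ⟨m, hm, rfl⟩
  obtain ⟨hmΦ, ham, hmc⟩ := mem_completions.1 hm
  by_cases hcons : Consistent d ↑m
  · exact h m ⟨hmΦ, hcons, hmc⟩ ham
  · exact .tri_of_imp_left (Prv.imp_bigConj_of_deriv (not_not.1 hcons)) (.thm (.a2 b))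

lemma exists_maxCons_consistent_succTheory (hsim : SimClosed Φ) (ha : a ∈ Φ)
    (hnd : ¬ Deriv true ↑w (tri a b)) : ∃ u, MaxCons true Φ u ∧ a ∈ u ∧
      Consistent true ↑(insert (simNeg b) (succTheory Φ w u)) := by
  by_contra! h
  refine hnd (deriv_tri_of_forall_maxCons hsim ha fun m hm ham => ?_)
  have hinc := Prv.imp_bigConj_of_deriv (not_not.1 (h m hm ham))
  refine .tri_of_imp_right (.mp (.taut ?_) hinc)
    (.tri_bigConj (s := succTheory Φ w m) fun χ hχ => (mem_succTheory.1 hχ).2)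
  refine isPropTaut_iff.2 fun v hv => ?_
  simp only [hv.imp, hv.bigConj_insert, hv.simNeg, hv.1]
  cases v b <;> cases v (bigConj (succTheory Φ w m)) <;> simp

lemma exists_maxCons_succ_not_mem (hsim : SimClosed Φ) (ha : a ∈ Φ) (hb : b ∈ Φ)
    (hnd : ¬ Deriv true ↑w (tri a b)) : ∃ u, MaxCons true Φ u ∧ a ∈ u ∧
      ∃ v, MaxCons true Φ v ∧ succTheory Φ w u ⊆ v ∧ b ∉ v := by
  obtain ⟨u, hu, hau, hcons⟩ := exists_maxCons_consistent_succTheory hsim ha hnd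
  obtain ⟨v, hv, hsub⟩ := exists_maxCons_superset hsim
    (Finset.insert_subset (hsim b hb) fun χ hχ => (mem_succTheory.1 hχ).1) hcons
  exact ⟨u, hu, hau, v, hv, (Finset.subset_insert _ _).trans hsub,
    fun hbv => hv.not_deriv_of_simNeg_mem (hsub (Finset.mem_insert_self _ _)) (.hyp hbv)⟩

/-- A world is labelled by a formula `c ∈ Φ` that its chosen successors must refute: a single
successor per pair of worlds then suffices to refute every `a ▷ b` missing from a world. -/
def CanonicalWorld (Φ : Finset Formula) : Type :=
  {w // MaxCons true Φ w} × {c // c ∈ Φ}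

instance (Φ : Finset Formula) : Finite (CanonicalWorld Φ) := by
  have : Finite {w // MaxCons true Φ w} :=
    (Φ.powerset.finite_toSet.subset fun w hw => Finset.mem_powerset.2 hw.1).to_subtype
  unfold CanonicalWorld
  infer_instance

noncomputable def canonicalSucc (Φ w u : Finset Formula) (c : Formula) : Finset Formula :=
  Classical.epsilon fun v => MaxCons true Φ v ∧ succTheory Φ w u ⊆ v ∧ c ∉ v

def canonicalModel (Φ : Finset Formula) : KripkeModel where
  W := CanonicalWorld Φ
  fin := inferInstance
  rel s t t' := t'.2 = t.2 ∧ t'.1.1 = canonicalSucc Φ s.1.1 t.1.1 t.2.1 ∧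
    succTheory Φ s.1.1 t.1.1 ⊆ t'.1.1 ∧ t.2.1 ∉ t'.1.1
  val s p := var p ∈ s.1.1

lemma canonicalModel_deterministic (Φ : Finset Formula) : (canonicalModel Φ).Deterministic := by
  rintro s t t₁ t₂ ⟨h₁, h₁', -⟩ ⟨h₂, h₂', -⟩
  exact Prod.ext (Subtype.ext (h₁'.trans h₂'.symm)) (h₁.trans h₂.symm)

theorem canonicalModel_forces_iff (hsub : SubClosed Φ) (hsim : SimClosed Φ) {ψ : Formula}
    (hψ : ψ ∈ Φ) (s : CanonicalWorld Φ) : (canonicalModel Φ).Forces s ψ ↔ ψ ∈ s.1.1 := by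
  induction ψ generalizing s with
  | var p => rfl
  | bot => exact ⟨False.elim, fun h => s.1.2.2.1 (.hyp h)⟩
  | imp a b iha ihb =>
      obtain ⟨ha, hb⟩ := hsub.1 a b hψ
      rw [s.1.2.imp_mem_iff hsub hψ, ← iha ha, ← ihb hb]
      rfl
  | tri a b iha ihb =>
      obtain ⟨ha, hb⟩ := hsub.2 a b hψ
      constructor
      · intro hf
        by_contra hmem
        obtain ⟨u, hu, hau, hex⟩ := exists_maxCons_succ_not_mem hsim ha hb
          fun hd => hmem ((s.1.2.mem_iff_deriv hψ).2 hd)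
        have hsucc := Classical.epsilon_spec hex
        obtain ⟨t', ⟨-, -, -, hbt'⟩, ht'⟩ := hf (⟨u, hu⟩, ⟨b, hb⟩) (⟨_, hsucc.1⟩, ⟨b, hb⟩)
          ⟨rfl, rfl, hsucc.2⟩ ((iha ha _).2 hau)
        exact hbt' ((ihb hb t').1 ht')
      · intro hmem t t' hrel ht
        have hat : a ∈ t.1.1 := (iha ha t).1 ht
        refine ⟨t', hrel, (ihb hb t').2 (hrel.2.2.1 (mem_succTheory.2 ⟨hb, ?_⟩))⟩
        exact .tri_of_imp_left (.taut (isPropTaut_bigConj_imp hat)) (.hyp hmem)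

end Canonical

def subformulas : Formula → Finset Formula
  | var n => {var n}
  | bot => {bot}
  | imp a b => insert (imp a b) (subformulas a ∪ subformulas b)
  | tri a b => insert (tri a b) (subformulas a ∪ subformulas b)

lemma mem_subformulas_self (φ : Formula) : φ ∈ subformulas φ := by
  cases φ <;> simp [subformulas]

lemma subformulas_subset {φ ψ : Formula} (h : ψ ∈ subformulas φ) :
    subformulas ψ ⊆ subformulas φ := by
  induction φ with
  | var n => simp_all [subformulas]
  | bot => simp_all [subformulas]
  | imp a b iha ihb | tri a b iha ihb =>
      simp only [subformulas, Finset.mem_insert, Finset.mem_union] at h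
      rcases h with rfl | h | h
      · exact subset_rfl
      · exact (iha h).trans (by intro; simp [subformulas]; tauto)
      · exact (ihb h).trans (by intro; simp [subformulas]; tauto)

lemma subClosed_subformulas (φ : Formula) : SubClosed (subformulas φ) := by
  constructor <;> intro a b h <;>
    exact ⟨subformulas_subset h (by simp [subformulas, mem_subformulas_self]),
      subformulas_subset h (by simp [subformulas, mem_subformulas_self])⟩

/-- `⊥` is added so that the negations `χ → ⊥` keep the set closed under subformulas. -/
def subformulaClosure (φ : Formula) : Finset Formula :=
  insert bot (subformulas φ) ∪ (insert bot (subformulas φ)).image neg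

lemma mem_subformulaClosure_of_mem {φ ψ : Formula} (h : ψ ∈ subformulas φ) :
    ψ ∈ subformulaClosure φ :=
  Finset.mem_union_left _ (Finset.mem_insert_of_mem h)

lemma mem_subformulaClosure_self (φ : Formula) : φ ∈ subformulaClosure φ :=
  mem_subformulaClosure_of_mem (mem_subformulas_self φ)

lemma subClosed_subformulaClosure (φ : Formula) : SubClosed (subformulaClosure φ) := by
  have hS := subClosed_subformulas φ
  constructor <;> intro a b h <;> simp [subformulaClosure, neg] at h
  · rcases h with ⟨rfl, rfl⟩ | h | ⟨ha, rfl⟩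
    · simp [subformulaClosure]
    · exact (hS.1 a b h).imp mem_subformulaClosure_of_mem mem_subformulaClosure_of_mem
    · simp [subformulaClosure, ha]
  · exact (hS.2 a b h).imp mem_subformulaClosure_of_mem mem_subformulaClosure_of_mem

lemma simClosed_subformulaClosure (φ : Formula) : SimClosed (subformulaClosure φ) := by
  intro ψ hψ
  rcases Finset.mem_union.1 hψ with hψ | hψ
  · have hneg : neg ψ ∈ subformulaClosure φ :=
      Finset.mem_union_right _ (Finset.mem_image_of_mem _ hψ)
    rcases ψ with _ | _ | ⟨χ, _ | _ | _ | _⟩ | _ <;> try exact hneg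
    simp only [Finset.mem_insert, reduceCtorEq, false_or] at hψ
    exact mem_subformulaClosure_of_mem ((subClosed_subformulas φ).1 χ bot hψ).1
  · obtain ⟨χ, hχ, rfl⟩ := Finset.mem_image.1 hψ
    exact Finset.mem_union_left _ hχ

theorem exists_deterministic_countermodel {φ : Formula} (h : ¬ Prv true φ) :
    ∃ M : KripkeModel, M.Deterministic ∧ ∃ w, ¬ M.Forces w φ := by
  have hφ := mem_subformulaClosure_self φ
  have hsim := simClosed_subformulaClosure φ
  have hcons : Consistent true ↑({simNeg φ} : Finset Formula) := fun hd => by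
    refine h (.mp (.taut (isPropTaut_iff.2 fun v hv => ?_)) (Prv.imp_bigConj_of_deriv hd))
    have hempty : v (bigConj ∅) = true := (hv.bigConj ∅).2 (by simp)
    simp only [hv.imp, ← Finset.insert_empty, hv.bigConj_insert, hv.simNeg, hv.1, hempty]
    cases v φ <;> simp
  obtain ⟨w, hw, hsw⟩ :=
    exists_maxCons_superset hsim (Finset.singleton_subset_iff.2 (hsim φ hφ)) hcons
  refine ⟨canonicalModel _, canonicalModel_deterministic _, (⟨w, hw⟩, ⟨φ, hφ⟩), fun hf => ?_⟩
  refine hw.not_deriv_of_simNeg_mem (hsw (Finset.mem_singleton_self _)) (.hyp ?_)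
  exact (canonicalModel_forces_iff (subClosed_subformulaClosure φ) hsim hφ _).1 hf

end Formula

section Realization

open Nat.Partrec (Code)
open Nat.Partrec.Code Encodable

/-- World `j < k` is played by the code `curry c j`; on input `pair i u` the machine `c`
recovers the index of `u` among the world codes and reads the successor off the table `T`. -/
def tableStep (T : List (List (Option ℕ))) (k : ℕ) (c : Code) (n : ℕ) : Option ℕ :=
  ((T[n.unpair.1]?).bind fun row =>
      row[(List.ofFn fun j : Fin k => encode (curry c j)).idxOf n.unpair.2]?).bind
    fun entry => entry.map fun m => encode (curry c m)

lemma primrec_tableStep (T : List (List (Option ℕ))) (k : ℕ) :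
    Primrec fun p : Code × ℕ => tableStep T k p.1 p.2 := by
  have hcode : Primrec₂ fun (c : Code) (j : ℕ) => encode (curry c j) :=
    Primrec.encode.comp primrec₂_curry
  have hcodes : Primrec fun c : Code => List.ofFn fun j : Fin k => encode (curry c j) :=
    Primrec.list_ofFn fun j => hcode.comp Primrec.id (Primrec.const _)
  have hrow : Primrec fun p : Code × ℕ => T[p.2.unpair.1]? :=
    Primrec.list_getElem?.comp (Primrec.const T)
      (Primrec.fst.comp (Primrec.unpair.comp Primrec.snd))
  have hidx : Primrec fun p : Code × ℕ =>
      (List.ofFn fun j : Fin k => encode (curry p.1 j)).idxOf p.2.unpair.2 :=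
    Primrec.list_idxOf.comp (Primrec.snd.comp (Primrec.unpair.comp Primrec.snd))
      (hcodes.comp Primrec.fst)
  have hentry := Primrec.option_bind hrow
    (Primrec.list_getElem?.comp Primrec.snd (hidx.comp Primrec.fst)).to₂
  have hmap : Primrec fun q : (Code × ℕ) × Option ℕ => q.2.map fun m => encode (curry q.1.1 m) :=
    Primrec.option_map Primrec.snd (hcode.comp (Primrec.fst.comp (Primrec.fst.comp Primrec.fst))
      Primrec.snd).to₂
  exact Primrec.option_bind hentry hmap.to₂

theorem exists_codes_realizing_fin {k : ℕ} (f : Fin k → Fin k → Option (Fin k)) :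
    ∃ A : Fin k → ℕ, Function.Injective A ∧
      (∀ i j, xi (A i) (A j) = ((f i j).map A : Part ℕ)) ∧
      ∀ i n, n ∉ Set.range A → xi (A i) n = Part.none := by
  set T : List (List (Option ℕ)) :=
    List.ofFn fun i => List.ofFn fun j => (f i j).map Fin.val
  have hT : Partrec₂ fun (c : Code) (n : ℕ) => (tableStep T k c n : Part ℕ) :=
    Computable.ofOption (primrec_tableStep T k).to_comp
  obtain ⟨c, hc⟩ := fixed_point₂ hT
  set A : Fin k → ℕ := fun j => encode (curry c j) with hA
  have hAinj : Function.Injective A := fun i j h => Fin.ext (curry_inj (encode_injective h)).2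
  have hxi : ∀ i n, xi (A i) n = tableStep T k c (Nat.pair i n) := fun i n => by
    rw [xi, hA, Denumerable.ofNat_encode, eval_curry, hc]
  refine ⟨A, hAinj, fun i j => ?_, fun i n hn => ?_⟩
  · have hidx : (List.ofFn A).idxOf (A j) = j := by
      simpa using (List.nodup_ofFn.2 hAinj).idxOf_getElem j (by simp)
    rw [hxi]
    simp [tableStep, ← hA, hidx, T, Option.map_map]
    rfl
  · have hnA : n ∉ List.ofFn A := by simpa [List.mem_ofFn] using hn
    have hidx : (List.ofFn A).idxOf n = k := by simpa using List.idxOf_eq_length_iff.2 hnA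
    rw [hxi]
    simp [tableStep, ← hA, hidx, T]

theorem exists_codes_realizing {W : Type*} [Finite W] (r : W → W → W → Prop)
    (hr : ∀ w u v v', r w u v → r w u v' → v = v') :
    ∃ A : W → ℕ, Function.Injective A ∧
      ∀ w n x, x ∈ xi (A w) n ↔ ∃ u v, r w u v ∧ n = A u ∧ x = A v := by
  classical
  set g : W → W → Option W := fun w u => if h : ∃ v, r w u v then some h.choose else none
  have hg : ∀ w u v, g w u = some v ↔ r w u v := by
    intro w u v
    simp only [g]
    split_ifs with h
    · exact ⟨fun hv => Option.some.inj hv ▸ h.choose_spec,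
        fun hv => congrArg some (hr _ _ _ _ h.choose_spec hv)⟩
    · exact ⟨nofun, fun hv => absurd ⟨v, hv⟩ h⟩
  set e := Finite.equivFin W
  obtain ⟨B, hBinj, hBstep, hBnone⟩ :=
    exists_codes_realizing_fin fun i j => (g (e.symm i) (e.symm j)).map e
  refine ⟨B ∘ e, hBinj.comp e.injective, fun w n x => ?_⟩
  by_cases hn : n ∈ Set.range B
  · obtain ⟨j, rfl⟩ := hn
    obtain ⟨u, rfl⟩ := e.surjective j
    have hstep := hBstep (e w) (e u)
    simp only [Equiv.symm_apply_apply, Option.map_map] at hstep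
    simp only [Function.comp_apply, hstep, Part.mem_ofOption, Option.mem_def,
      Option.map_eq_some_iff, hg]
    constructor
    · rintro ⟨v, hv, rfl⟩
      exact ⟨u, v, hv, rfl, rfl⟩
    · rintro ⟨u', v, hv, hu, rfl⟩
      obtain rfl := e.injective (hBinj hu)
      exact ⟨v, hv, rfl⟩
  · simp only [Function.comp_apply, hBnone _ _ hn, Part.notMem_none, false_iff]
    rintro ⟨u, v, -, rfl, -⟩
    exact hn ⟨e u, rfl⟩

end Realization

namespace Formula

section Arithmetic

variable {val : ℕ → Set ℕ} {a b : Formula} {w : ℕ}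

lemma mem_semD_imp : w ∈ semD val (imp a b) ↔ (w ∈ semD val a → w ∈ semD val b) := by
  simp only [semD, Set.mem_union, Set.mem_sdiff, Set.mem_univ, true_and]
  tauto

lemma mem_semD_neg : w ∈ semD val (neg a) ↔ w ∉ semD val a := by
  simp [neg, semD]

lemma mem_semD_conj : w ∈ semD val (conj a b) ↔ w ∈ semD val a ∧ w ∈ semD val b := by
  simp [conj, mem_semD_neg, mem_semD_imp]

lemma mem_semD_disj : w ∈ semD val (disj a b) ↔ w ∈ semD val a ∨ w ∈ semD val b := by
  simp only [disj, mem_semD_imp, mem_semD_neg]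
  tauto

lemma mem_semD_tri :
    w ∈ semD val (tri a b) ↔ ∀ u ∈ semD val a, ∀ x ∈ xi w u, x ∈ semD val b := by
  refine ⟨fun h u hu x hx => ?_, fun h u hu hdom => h u hu _ (Part.get_mem hdom)⟩
  rw [← Part.get_eq_of_mem hx (Part.dom_iff_mem.2 ⟨x, hx⟩)]
  exact h u hu _

theorem semD_eq_univ_of_prv {d : Bool} {φ : Formula} (h : Prv d φ) (val : ℕ → Set ℕ) :
    semD val φ = Set.univ := by
  refine Set.eq_univ_of_forall fun n => ?_
  induction h generalizing n with
  | taut ht =>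
      classical
      simpa using ht (fun χ => decide (n ∈ semD val χ)) (by simp [semD])
        (fun a b => by by_cases n ∈ semD val a <;> simp [mem_semD_imp, *])
  | a1 =>
      simp only [mem_semD_imp, mem_semD_tri, mem_semD_disj]
      exact fun h₁ h₂ u hu => hu.elim (h₁ u) (h₂ u)
  | a2 => simp [semD]
  | a3 => simp [top, mem_semD_neg, semD]
  | a4 =>
      simp only [mem_semD_imp, mem_semD_tri, mem_semD_conj]
      exact fun h₁ h₂ u hu x hx => ⟨h₁ u hu x hx, h₂ u hu x hx⟩
  | mp _ _ ih₁ ih₂ => exact mem_semD_imp.1 (ih₁ n) (ih₂ n)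
  | mono _ _ ih₁ ih₂ =>
      simp only [mem_semD_imp, mem_semD_tri] at ih₁ ih₂ ⊢
      exact fun h u hu x hx => ih₂ x (h u (ih₁ u hu) x hx)

end Arithmetic

end Formula

namespace KripkeModel

open Formula

variable {M : KripkeModel}

lemma Deterministic.forces_tri_iff (hM : M.Deterministic) {w : M.W} {a b : Formula} :
    M.Forces w (tri a b) ↔ ∀ u v, M.rel w u v → M.Forces u a → M.Forces v b := by
  refine ⟨fun h u v huv hu => ?_, fun h u v huv hu => ⟨v, huv, h u v huv hu⟩⟩
  obtain ⟨v', huv', hv'⟩ := h u v huv hu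
  exact hM w u v v' huv huv' ▸ hv'

theorem Deterministic.exists_semD_iff_forces (hM : M.Deterministic) :
    ∃ (A : M.W → ℕ) (val : ℕ → Set ℕ), ∀ φ w, A w ∈ semD val φ ↔ M.Forces w φ := by
  have := M.fin
  obtain ⟨A, hAinj, hA⟩ := exists_codes_realizing M.rel hM
  refine ⟨A, fun p => A '' {w | M.val w p}, fun φ => ?_⟩
  induction φ with
  | var p => exact fun w => hAinj.mem_set_image
  | bot => simp [semD, KripkeModel.Forces, Formula.Forces]
  | imp a b iha ihb =>
      intro w
      rw [mem_semD_imp, iha, ihb]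
      rfl
  | tri a b iha ihb =>
      intro w
      rw [mem_semD_tri, hM.forces_tri_iff]
      constructor
      · intro h u v huv hu
        exact (ihb v).1 (h _ ((iha u).2 hu) _ ((hA w _ _).2 ⟨u, v, huv, rfl, rfl⟩))
      · rintro h _ hu _ hx
        obtain ⟨u, v, huv, rfl, rfl⟩ := (hA w _ _).1 hx
        exact (ihb v).2 (h u v huv ((iha u).1 hu))

end KripkeModel

open Formula in
/-- Main theorem for ℜ_d: for every formula φ the following are equivalent:
(1) φ is a tautology of the enumeration ξ of deterministic partial recursive
functions; (2) φ is forced at every world of every deterministic Kripke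
model; (3) φ is a theorem of ℜ_d. -/
theorem grand_Rd (φ : Formula) :
    List.TFAE [
      ∀ val : ℕ → Set ℕ, semD val φ = Set.univ,
      ∀ (M : KripkeModel), M.Deterministic → ∀ w : M.W, M.Forces w φ,
      Prv true φ ] := by
  tfae_have 3 → 1 := fun h val => semD_eq_univ_of_prv h val
  tfae_have 1 → 2 := fun h M hM w => by
    obtain ⟨A, val, hA⟩ := hM.exists_semD_iff_forces
    exact (hA φ w).1 (h val ▸ Set.mem_univ _)
  tfae_have 2 → 3 := fun h => by
    by_contra hφ
    obtain ⟨M, hM, w, hw⟩ := exists_deterministic_countermodel hφ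
    exact hw (h M hM w)
  tfae_finish
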